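/- arXiv:2204.08092 — 9 statements merged into one kernel-verified Lean document; each statement's English description precedes it below -/
import Mathlib

section
/- Let k be a Mercer kernel on ℤ≥0 with RKHS H. Then H is contained in ℓ¹(ℤ≥0) (i.e. every g ∈ H satisfies Σ_{t∈ℤ≥0} |g(t)| < ∞) if and only if for every bounded sequence u : ℤ≥0 → ℝ one has Σ_{t∈ℤ≥0} | Σ_{s∈ℤ≥0} u(s) k(t,s) | < ∞. -/
/-!
If `H ⊆ ℓ¹` and `u` is bounded, `g ↦ ∑ₜ u(t) g(t)` is defined on all of `H`, hence bounded by
Banach–Steinhaus and represented by some `h ∈ H`; the reproducing property gives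
`h(t) = ∑ₛ u(s) k(t,s)`, and `h ∈ ℓ¹`.

Conversely, the functionals `v ↦ ∑_{t ∈ F} εₜ ∑ₛ v(s) k(t,s)` on `ℓ^∞`, over finite `F` and signs
`ε`, are pointwise bounded by the hypothesis, hence uniformly bounded by some `M`. Evaluated at
`ε · 1_F` they give `‖∑_{t ∈ F} εₜ kₜ‖² ≤ M`, so with `εₜ = sign g(t)` we get
`∑_{t ∈ F} |g(t)| = ⟪g, ∑_{t ∈ F} εₜ kₜ⟫ ≤ ‖g‖ √M`.
-/

open scoped InnerProductSpace ENNReal lp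
open Filter Topology Finset

section Hilbert

variable {ι H : Type*} [NormedAddCommGroup H] [InnerProductSpace ℝ H]

theorem exists_inner_eq_tsum_of_summable_inner [CompleteSpace H] (x : ℕ → H)
    (hx : ∀ g, Summable fun t => ⟪x t, g⟫_ℝ) :
    ∃ h : H, ∀ g, ⟪h, g⟫_ℝ = ∑' t, ⟪x t, g⟫_ℝ := by
  have hlim : Tendsto (fun n g => innerSL ℝ (∑ t ∈ range n, x t) g) atTop
      (𝓝 fun g => ∑' t, ⟪x t, g⟫_ℝ) := by
    refine tendsto_pi_nhds.2 fun g => ?_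
    simpa only [innerSL_apply_apply, sum_inner] using (hx g).hasSum.tendsto_sum_nat
  -- `continuousLinearMapOfTendsto` is Banach–Steinhaus; Riesz then represents the limit.
  refine ⟨(InnerProductSpace.toDual ℝ H).symm (continuousLinearMapOfTendsto _ hlim),
    fun g => ?_⟩
  rw [InnerProductSpace.toDual_symm_apply]
  rfl

theorem norm_sum_smul_sq (F : Finset ι) (a : ι → ℝ) (x : ι → H) :
    ‖∑ t ∈ F, a t • x t‖ ^ 2 = ∑ t ∈ F, ∑ s ∈ F, a t * a s * ⟪x t, x s⟫_ℝ := by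
  rw [← real_inner_self_eq_norm_sq, sum_inner]
  simp only [inner_sum, real_inner_smul_left, real_inner_smul_right, mul_assoc]
  exact sum_congr rfl fun _ _ => sum_congr rfl fun _ _ => mul_left_comm _ _ _

theorem summable_abs_inner_of_norm_sum_sign_smul_le (x : ι → H) {C : ℝ}
    (hC : ∀ (F : Finset ι) (ε : ι → SignType), ‖∑ t ∈ F, (ε t : ℝ) • x t‖ ≤ C) (g : H) :
    Summable fun t => |⟪x t, g⟫_ℝ| := by
  refine summable_of_sum_le (c := C * ‖g‖) (fun t => abs_nonneg _) fun F => ?_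
  calc ∑ t ∈ F, |⟪x t, g⟫_ℝ|
      = ⟪∑ t ∈ F, (SignType.sign ⟪x t, g⟫_ℝ : ℝ) • x t, g⟫_ℝ := by
        simp only [sum_inner, real_inner_smul_left, sign_mul_self]
    _ ≤ ‖∑ t ∈ F, (SignType.sign ⟪x t, g⟫_ℝ : ℝ) • x t‖ * ‖g‖ := real_inner_le_norm _ _
    _ ≤ C * ‖g‖ := by gcongr; exact hC F _

end Hilbert

theorem SignType.abs_coe_le_one (ε : SignType) : |(ε : ℝ)| ≤ 1 := by
  cases ε <;> simp

theorem Summable.mul_of_abs_le {ι : Type*} {u r : ι → ℝ} {C : ℝ} (hu : ∀ s, |u s| ≤ C)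
    (hr : Summable fun s => |r s|) : Summable fun s => u s * r s :=
  .of_norm_bounded (hr.mul_left C) fun s => by
    rw [Real.norm_eq_abs, abs_mul]
    exact mul_le_mul_of_nonneg_right (hu s) (abs_nonneg _)

namespace lp

noncomputable def tsumMulCLM (r : ℕ → ℝ) (hr : Summable fun s => |r s|) :
    ℓ^∞(ℕ, ℝ) →L[ℝ] ℝ :=
  continuousLinearMapOfTendsto
    (fun n => ∑ s ∈ range n, r s • evalCLM ℝ (fun _ : ℕ => ℝ) ∞ s)
    (f := fun v => ∑' s, v s * r s) <| tendsto_pi_nhds.2 fun v => by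
      have hv := Summable.mul_of_abs_le (norm_apply_le_norm ENNReal.top_ne_zero v) hr
      simpa [evalCLM, mul_comm] using hv.hasSum.tendsto_sum_nat

theorem tsumMulCLM_apply (r : ℕ → ℝ) (hr : Summable fun s => |r s|) (v : ℓ^∞(ℕ, ℝ)) :
    tsumMulCLM r hr v = ∑' s, v s * r s := rfl

theorem exists_norm_le_one_eq_indicator_sign {ι : Type*} (F : Finset ι) (ε : ι → SignType) :
    ∃ w : ℓ^∞(ι, ℝ), ‖w‖ ≤ 1 ∧ ⇑w = Set.indicator F fun s => (ε s : ℝ) := by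
  have hle : ∀ s, ‖Set.indicator F (fun s => (ε s : ℝ)) s‖ ≤ 1 := fun s => by
    by_cases hs : s ∈ (F : Set ι) <;> simp [hs, SignType.abs_coe_le_one]
  exact ⟨⟨_, memℓp_infty ⟨1, Set.forall_mem_range.2 hle⟩⟩, norm_le_of_forall_le zero_le_one hle,
    rfl⟩

end lp

theorem exists_sum_sign_mul_sign_mul_le (k : ℕ → ℕ → ℝ)
    (hrow : ∀ t, Summable fun s => |k t s|)
    (hk : ∀ v : ℓ^∞(ℕ, ℝ), Summable fun t => |∑' s, v s * k t s|) :
    ∃ M, ∀ (F : Finset ℕ) (ε : ℕ → SignType), ∑ t ∈ F, ∑ s ∈ F, (ε t : ℝ) * ε s * k t s ≤ M := by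
  let T : Finset ℕ × (ℕ → SignType) → ℓ^∞(ℕ, ℝ) →L[ℝ] ℝ := fun p =>
    ∑ t ∈ p.1, (p.2 t : ℝ) • lp.tsumMulCLM (k t) (hrow t)
  have hT : ∀ p v, T p v = ∑ t ∈ p.1, (p.2 t : ℝ) * ∑' s, v s * k t s := fun p v => by
    simp [T, lp.tsumMulCLM_apply]
  obtain ⟨M, hM⟩ := banach_steinhaus (g := T) fun v => ⟨∑' t, |∑' s, v s * k t s|, fun p => by
    rw [hT, Real.norm_eq_abs]
    calc _ ≤ ∑ t ∈ p.1, |∑' s, v s * k t s| :=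
          (abs_sum_le_sum_abs _ _).trans <| sum_le_sum fun t _ => by
            rw [abs_mul]
            exact mul_le_of_le_one_left (abs_nonneg _) (SignType.abs_coe_le_one _)
      _ ≤ _ := (hk v).sum_le_tsum _ fun _ _ => abs_nonneg _⟩
  refine ⟨M, fun F ε => ?_⟩
  obtain ⟨w, hw1, hw⟩ := lp.exists_norm_le_one_eq_indicator_sign F ε
  have htsum_w : ∀ t, ∑' s, w s * k t s = ∑ s ∈ F, (ε s : ℝ) * k t s := fun t => by
    rw [tsum_eq_sum (s := F) fun s hs => by simp [hw, hs]]
    exact sum_congr rfl fun s hs => by simp [hw, hs]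
  calc ∑ t ∈ F, ∑ s ∈ F, (ε t : ℝ) * ε s * k t s = T (F, ε) w := by
        simp only [hT, htsum_w, mul_sum, mul_assoc]
    _ ≤ ‖T (F, ε)‖ := (le_abs_self _).trans ((T (F, ε)).unit_le_opNorm w hw1)
    _ ≤ M := hM _

theorem stmt_0_general
    {H : Type*} [NormedAddCommGroup H] [InnerProductSpace ℝ H] [CompleteSpace H]
    (k : ℕ → ℕ → ℝ)
    (hsymm : ∀ s t, k s t = k t s)
    (ι : H →ₗ[ℝ] (ℕ → ℝ))
    (K : ℕ → H) (hK : ∀ t s, ι (K t) s = k t s)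
    (hrep : ∀ (g : H) (t : ℕ), ⟪g, K t⟫_ℝ = ι g t) :
    (∀ g : H, Summable fun t => |ι g t|) ↔
      (∀ u : ℕ → ℝ, (∃ C, ∀ s, |u s| ≤ C) →
        (∀ t, Summable fun s => u s * k t s) ∧
          Summable fun t => |∑' s, u s * k t s|) := by
  have hcoef : ∀ g t, ⟪K t, g⟫_ℝ = ι g t := fun g t => by rw [real_inner_comm, hrep]
  constructor
  · rintro hl1 u ⟨C, hC⟩
    have hsum : ∀ g, Summable fun t => u t * ι g t := fun g => .mul_of_abs_le hC (hl1 g)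
    obtain ⟨h, hh⟩ := exists_inner_eq_tsum_of_summable_inner (fun t => u t • K t) fun g => by
      simpa only [real_inner_smul_left, hcoef] using hsum g
    refine ⟨fun t => by simpa only [hK] using hsum (K t), (hl1 h).congr fun t => ?_⟩
    rw [← hrep, hh]
    simp only [real_inner_smul_left, hcoef, hK]
  · intro hk g
    have hrow : ∀ t, Summable fun s => |k t s| := fun t => by
      simpa [Pi.single_apply, hsymm t] using
        (hk (Pi.single t 1) ⟨1, fun s => by by_cases hs : s = t <;> simp [hs]⟩).2
    obtain ⟨M, hM⟩ := exists_sum_sign_mul_sign_mul_le k hrow fun v =>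
      (hk v ⟨‖v‖, fun s => lp.norm_apply_le_norm ENNReal.top_ne_zero v s⟩).2
    have hbound : ∀ (F : Finset ℕ) (ε : ℕ → SignType), ‖∑ t ∈ F, (ε t : ℝ) • K t‖ ≤ √M :=
      fun F ε => Real.le_sqrt_of_sq_le (by simpa only [norm_sum_smul_sq, hrep, hK] using hM F ε)
    simpa only [hcoef] using summable_abs_inner_of_norm_sum_sign_smul_le K hbound g

/-- For a Mercer kernel `k` on `ℤ≥0` with RKHS `H`, the inclusion
`H ⊆ ℓ¹(ℤ≥0)` holds iff for every bounded `u : ℕ → ℝ` the double expression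
`∑_t |∑_s u s * k t s|` is finite. -/
theorem stmt_0
    {H : Type*} [NormedAddCommGroup H] [InnerProductSpace ℝ H] [CompleteSpace H]
    (k : ℕ → ℕ → ℝ)
    (hsymm : ∀ s t, k s t = k t s)
    (hpsd : ∀ (n : ℕ) (t : Fin n → ℕ) (a : Fin n → ℝ),
      0 ≤ ∑ i, ∑ j, a i * a j * k (t i) (t j))
    (ι : H →ₗ[ℝ] (ℕ → ℝ)) (hι : Function.Injective ι)
    (K : ℕ → H) (hK : ∀ t s, ι (K t) s = k t s)
    (hrep : ∀ (g : H) (t : ℕ), ⟪g, K t⟫_ℝ = ι g t) :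
    (∀ g : H, Summable fun t => |ι g t|) ↔
      (∀ u : ℕ → ℝ, (∃ C, ∀ s, |u s| ≤ C) →
        (∀ t, Summable fun s => u s * k t s) ∧
          Summable fun t => |∑' s, u s * k t s|) :=
  stmt_0_general k hsymm ι K hK hrep
end

section
/- Let k be a Mercer kernel on 𝕋 = [0,∞) with RKHS H. Then H is contained in L¹([0,∞)) (i.e. every g ∈ H satisfies ∫_{[0,∞)} |g(t)| dt < ∞) if and only if for every essentially bounded measurable function u : [0,∞) → ℝ one has ∫_{[0,∞)} | ∫_{[0,∞)} u(s) k(t,s) ds | dt < ∞. -/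
/-!
Both directions rest on the closed graph theorem: a linear map from a Banach space into `L¹`
that is continuous pointwise (a.e.) is bounded.

If `H ⊆ L¹`, the inclusion is bounded, so for bounded `u` the functional `g ↦ ∫ u g` is represented
by some `h ∈ H`, and `h(t) = ⟪h, k_t⟫ = ∫ u(s) k(t,s) ds` is integrable.

Conversely, if `A u (t) = ∫ u(s) k(t,s) ds` maps `L^∞` into `L¹`, then `A` is bounded, say by `C`.
For `g ∈ H` and `S = (0,b]` let `h ∈ H` represent `x ↦ ∫_S sign(g) x`. Then `h = A (1_S sign g)`,
hence `‖h‖² = ∫_S sign(g) h ≤ ‖A (1_S sign g)‖₁ ≤ C`, and `∫_S |g| = ⟪g, h⟫ ≤ ‖g‖ √C`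
uniformly in `b`.
-/

open scoped InnerProductSpace ENNReal
open MeasureTheory Set Filter

section Integration

variable {α : Type*} [MeasurableSpace α] {μ : Measure α}

theorem ae_norm_le_toReal_eLpNorm_top {E : Type*} [NormedAddCommGroup E] {f : α → E}
    (hf : eLpNorm f ∞ μ ≠ ∞) : ∀ᵐ a ∂μ, ‖f a‖ ≤ (eLpNorm f ∞ μ).toReal := by
  rw [eLpNorm_exponent_top] at hf ⊢
  filter_upwards [ae_le_eLpNormEssSup (f := f) (μ := μ)] with a ha
  simpa using ENNReal.toReal_mono hf ha

theorem MeasureTheory.Lp.ae_norm_apply_le_norm {E : Type*} [NormedAddCommGroup E]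
    (v : Lp E ∞ μ) : ∀ᵐ a ∂μ, ‖v a‖ ≤ ‖v‖ :=
  ae_norm_le_toReal_eLpNorm_top (Lp.eLpNorm_ne_top v)

theorem norm_integral_mul_le_of_ae_norm_le {u f : α → ℝ} {M : ℝ} (hu : ∀ᵐ a ∂μ, ‖u a‖ ≤ M)
    (hf : Integrable f μ) : ‖∫ a, u a * f a ∂μ‖ ≤ M * ∫ a, ‖f a‖ ∂μ := by
  rw [← integral_const_mul]
  refine norm_integral_le_of_norm_le (hf.norm.const_mul M) ?_
  filter_upwards [hu] with a ha
  rw [norm_mul]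
  exact mul_le_mul_of_nonneg_right ha (norm_nonneg _)

theorem exists_norm_le_one_mul_eq_norm {f : α → ℝ} (hf : AEMeasurable f μ) :
    ∃ σ : α → ℝ, AEStronglyMeasurable σ μ ∧ (∀ a, ‖σ a‖ ≤ 1) ∧ ∀ a, σ a * f a = ‖f a‖ := by
  refine ⟨fun a => if 0 ≤ f a then 1 else -1, ?_, fun a => ?_, fun a => ?_⟩
  · exact ((Measurable.ite (measurableSet_le measurable_const measurable_id) measurable_const
      measurable_const).comp_aemeasurable hf).aestronglyMeasurable
  · dsimp only
    split_ifs <;> simp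
  · dsimp only
    split_ifs with h
    · simp [abs_of_nonneg h]
    · simp [abs_of_neg (not_le.mp h)]

/-- Closed graph theorem for the map `E → L¹(μ)`, `x ↦ Φ x`. -/
theorem exists_integral_norm_le_mul_norm {E : Type*} [NormedAddCommGroup E] [NormedSpace ℝ E]
    [CompleteSpace E] {Φ : E → α → ℝ} (hint : ∀ x, Integrable (Φ x) μ)
    (hΦ : ∀ᵐ a ∂μ, IsBoundedLinearMap ℝ fun x => Φ x a) :
    ∃ C, 0 ≤ C ∧ ∀ x, ∫ a, ‖Φ x a‖ ∂μ ≤ C * ‖x‖ := by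
  let L : E →ₗ[ℝ] α →₁[μ] ℝ :=
    { toFun := fun x => (hint x).toL1
      map_add' := fun x y => by
        rw [← Integrable.toL1_add, Integrable.toL1_eq_toL1_iff]
        filter_upwards [hΦ] with a ha using ha.toIsLinearMap.map_add x y
      map_smul' := fun c x => by
        rw [RingHom.id_apply, ← Integrable.toL1_smul', Integrable.toL1_eq_toL1_iff]
        filter_upwards [hΦ] with a ha using ha.toIsLinearMap.map_smul c x }
  have hL : Continuous L := by
    refine L.continuous_of_seq_closed_graph fun x x₀ f hx hLx => ?_
    obtain ⟨ns, hns, hae⟩ := ((tendstoInMeasure_of_tendsto_Lp hLx).congr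
      (fun n => (hint (x n)).coeFn_toL1) EventuallyEq.rfl).exists_seq_tendsto_ae
    refine Lp.ext ?_
    filter_upwards [hae, hΦ, (hint x₀).coeFn_toL1] with a hfa ha hx₀
    rw [show L x₀ = (hint x₀).toL1 from rfl, hx₀]
    exact tendsto_nhds_unique hfa ((ha.continuous.tendsto x₀).comp (hx.comp hns.tendsto_atTop))
  let L' : E →L[ℝ] α →₁[μ] ℝ := ⟨L, hL⟩
  refine ⟨‖L'‖, norm_nonneg _, fun x => ?_⟩
  rw [← L1.norm_of_fun_eq_integral_norm (hint x)]
  exact L'.le_opNorm x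

theorem exists_inner_eq_integral_mul {E : Type*} [NormedAddCommGroup E] [InnerProductSpace ℝ E]
    [CompleteSpace E] (ι : E →ₗ[ℝ] α → ℝ) (hint : ∀ x, Integrable (ι x) μ)
    (hcont : ∀ᵐ a ∂μ, Continuous fun x => ι x a) {u : α → ℝ} (hu : MemLp u ∞ μ) :
    ∃ h : E, ∀ x, ⟪x, h⟫_ℝ = ∫ a, u a * ι x a ∂μ := by
  obtain ⟨C, -, hC⟩ := exists_integral_norm_le_mul_norm hint (by
    filter_upwards [hcont] with a ha
    exact (⟨(LinearMap.proj a).comp ι, ha⟩ : E →L[ℝ] ℝ).isBoundedLinearMap)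
  have hM := ae_norm_le_toReal_eLpNorm_top hu.eLpNorm_ne_top
  have hmul : ∀ x, Integrable (fun a => u a * ι x a) μ := fun x => (hint x).mul_of_top_right hu
  let φ : E →ₗ[ℝ] ℝ :=
    { toFun := fun x => ∫ a, u a * ι x a ∂μ
      map_add' := fun x y => by
        simp only [map_add, Pi.add_apply, mul_add]
        exact integral_add (hmul x) (hmul y)
      map_smul' := fun c x => by
        simp only [map_smul, Pi.smul_apply, smul_eq_mul, RingHom.id_apply, mul_left_comm (u _)]
        exact integral_const_mul c _ }
  let φ' : StrongDual ℝ E := φ.mkContinuous ((eLpNorm u ∞ μ).toReal * C) fun x =>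
    calc ‖φ x‖ ≤ (eLpNorm u ∞ μ).toReal * ∫ a, ‖ι x a‖ ∂μ :=
          norm_integral_mul_le_of_ae_norm_le hM (hint x)
      _ ≤ (eLpNorm u ∞ μ).toReal * (C * ‖x‖) := by gcongr; exact hC x
      _ = _ := by ring
  refine ⟨(InnerProductSpace.toDual ℝ E).symm φ', fun x => ?_⟩
  rw [real_inner_comm, InnerProductSpace.toDual_symm_apply]
  rfl

end Integration

theorem continuousOn_of_continuousOn_inner {X E : Type*} [TopologicalSpace X]
    [NormedAddCommGroup E] [InnerProductSpace ℝ E] {K : X → E} {s : Set X}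
    (h : ContinuousOn (fun p : X × X => ⟪K p.1, K p.2⟫_ℝ) (s ×ˢ s)) : ContinuousOn K s := by
  intro t₀ ht₀
  have h₁ : ContinuousWithinAt (fun t => ⟪K t, K t⟫_ℝ) s t₀ :=
    (h.comp (continuous_id.prodMk continuous_id).continuousOn fun t ht => mk_mem_prod ht ht) t₀ ht₀
  have h₂ : ContinuousWithinAt (fun t => ⟪K t, K t₀⟫_ℝ) s t₀ :=
    (h.comp (continuous_id.prodMk continuous_const).continuousOn fun t ht => mk_mem_prod ht ht₀)
      t₀ ht₀
  have hlim : Tendsto (fun t => ⟪K t, K t⟫_ℝ - 2 * ⟪K t, K t₀⟫_ℝ + ⟪K t₀, K t₀⟫_ℝ)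
      (nhdsWithin t₀ s) (nhds 0) := by
    have hc : ContinuousWithinAt
        (fun t => ⟪K t, K t⟫_ℝ - 2 * ⟪K t, K t₀⟫_ℝ + ⟪K t₀, K t₀⟫_ℝ) s t₀ :=
      (h₁.sub (h₂.const_mul 2)).add continuousWithinAt_const
    convert hc.tendsto using 2
    ring
  have hsq : Tendsto (fun t => ‖K t - K t₀‖ ^ 2) (nhdsWithin t₀ s) (nhds 0) :=
    hlim.congr fun t => by
      rw [norm_sub_sq_real, real_inner_self_eq_norm_sq, real_inner_self_eq_norm_sq]
  rw [ContinuousWithinAt, tendsto_iff_norm_sub_tendsto_zero]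
  simpa using hsq.sqrt

section Kernel

variable {α : Type*} [MeasurableSpace α] {μ : Measure α}

def KernelMapsLinftyToL1 (μ : Measure α) (T : Set α) (k : α → α → ℝ) : Prop :=
  ∀ u : α → ℝ, MemLp u ∞ μ →
    (∀ t ∈ T, IntegrableOn (fun s => u s * k t s) T μ) ∧
      IntegrableOn (fun t => |∫ s in T, u s * k t s ∂μ|) T μ

theorem exists_integral_abs_integral_mul_le [SFinite μ] {T : Set α} (hT : MeasurableSet T)
    {k : α → α → ℝ}
    (hk : AEStronglyMeasurable (fun p : α × α => k p.1 p.2) ((μ.restrict T).prod (μ.restrict T)))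
    (hkL : KernelMapsLinftyToL1 μ T k) :
    ∃ C, 0 ≤ C ∧ ∀ u, MemLp u ∞ μ →
      ∫ t in T, |∫ s in T, u s * k t s ∂μ| ∂μ ≤ C * (eLpNorm u ∞ μ).toReal := by
  have hk1 : ∀ t ∈ T, IntegrableOn (fun s => k t s) T μ := fun t ht => by
    simpa using (hkL (fun _ => 1) (memLp_top_const 1)).1 t ht
  have hTint : ∀ v : Lp ℝ ∞ μ,
      Integrable (fun t => ∫ s in T, v s * k t s ∂μ) (μ.restrict T) := fun v =>
    (integrable_norm_iff ((Lp.aestronglyMeasurable v).restrict.comp_snd.mul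
      hk).integral_prod_right').mp (hkL v (Lp.memLp v)).2
  have hlin : ∀ᵐ t ∂μ.restrict T,
      IsBoundedLinearMap ℝ fun v : Lp ℝ ∞ μ => ∫ s in T, v s * k t s ∂μ := by
    filter_upwards [ae_restrict_mem hT] with t ht
    have hmul := fun v : Lp ℝ ∞ μ => (hkL v (Lp.memLp v)).1 t ht
    refine IsLinearMap.with_bound ⟨fun v w => ?_, fun c v => ?_⟩ (∫ s in T, ‖k t s‖ ∂μ)
      fun v => ?_
    · rw [← integral_add (hmul v) (hmul w)]
      refine integral_congr_ae ?_
      filter_upwards [ae_restrict_of_ae (Lp.coeFn_add v w)] with s hs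
      rw [hs, Pi.add_apply, add_mul]
    · rw [smul_eq_mul, ← integral_const_mul]
      refine integral_congr_ae ?_
      filter_upwards [ae_restrict_of_ae (Lp.coeFn_smul c v)] with s hs
      rw [hs, Pi.smul_apply, smul_eq_mul, mul_assoc]
    · rw [mul_comm]
      exact norm_integral_mul_le_of_ae_norm_le (ae_restrict_of_ae (Lp.ae_norm_apply_le_norm v))
        (hk1 t ht)
  obtain ⟨C, hC0, hC⟩ := exists_integral_norm_le_mul_norm hTint hlin
  refine ⟨C, hC0, fun u hu => ?_⟩
  calc ∫ t in T, |∫ s in T, u s * k t s ∂μ| ∂μ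
      = ∫ t in T, ‖∫ s in T, hu.toLp u s * k t s ∂μ‖ ∂μ := by
        refine integral_congr_ae (Eventually.of_forall fun t => ?_)
        simp only [Real.norm_eq_abs]
        congr 1
        refine integral_congr_ae ?_
        filter_upwards [ae_restrict_of_ae hu.coeFn_toLp] with s hs
        rw [hs]
    _ ≤ C * ‖hu.toLp u‖ := hC _
    _ = C * (eLpNorm u ∞ μ).toReal := by rw [Lp.norm_toLp]

variable {H : Type*} [NormedAddCommGroup H] [InnerProductSpace ℝ H] [CompleteSpace H]

theorem exists_inner_eq_integral_mul_of_reproducing {S T : Set α} (hS : MeasurableSet S)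
    (hST : S ⊆ T) {k : α → α → ℝ} (ι : H →ₗ[ℝ] α → ℝ) (K : α → H)
    (hK : ∀ t ∈ T, ∀ s ∈ T, ι (K t) s = k t s) (hrep : ∀ g : H, ∀ t ∈ T, ⟪g, K t⟫_ℝ = ι g t)
    (hint : ∀ g, IntegrableOn (ι g) S μ) {u : α → ℝ} (hu : MemLp u ∞ (μ.restrict S)) :
    ∃ h : H, (∀ g, ⟪g, h⟫_ℝ = ∫ s in S, u s * ι g s ∂μ) ∧
      ∀ t ∈ T, ι h t = ∫ s in S, u s * k t s ∂μ := by
  have hcont : ∀ᵐ t ∂μ.restrict S, Continuous fun g : H => ι g t := by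
    filter_upwards [ae_restrict_mem hS] with t ht
    exact (continuous_id.inner continuous_const).congr fun g => hrep g t (hST ht)
  obtain ⟨h, hh⟩ := exists_inner_eq_integral_mul ι hint hcont hu
  refine ⟨h, hh, fun t ht => ?_⟩
  rw [← hrep h t ht, real_inner_comm, hh]
  exact setIntegral_congr_fun hS fun s hs => by rw [hK t ht s (hST hs)]

theorem kernelMapsLinftyToL1_of_integrableOn {T : Set α} (hT : MeasurableSet T)
    {k : α → α → ℝ} (ι : H →ₗ[ℝ] α → ℝ) (K : α → H)
    (hK : ∀ t ∈ T, ∀ s ∈ T, ι (K t) s = k t s) (hrep : ∀ g : H, ∀ t ∈ T, ⟪g, K t⟫_ℝ = ι g t)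
    (hL1 : ∀ g, IntegrableOn (ι g) T μ) : KernelMapsLinftyToL1 μ T k := by
  intro u hu
  obtain ⟨h, -, hh⟩ :=
    exists_inner_eq_integral_mul_of_reproducing hT subset_rfl ι K hK hrep hL1 (hu.restrict T)
  refine ⟨fun t ht => ?_, IntegrableOn.congr_fun (hL1 h).abs (fun t ht => by rw [hh t ht]) hT⟩
  exact IntegrableOn.congr_fun ((hL1 (K t)).mul_of_top_right (hu.restrict T))
    (fun s hs => by simp [hK t ht s hs]) hT

theorem integral_norm_le_of_reproducing {S T : Set α} (hS : MeasurableSet S)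
    (hT : MeasurableSet T) (hST : S ⊆ T) {k : α → α → ℝ} (ι : H →ₗ[ℝ] α → ℝ) (K : α → H)
    (hK : ∀ t ∈ T, ∀ s ∈ T, ι (K t) s = k t s) (hrep : ∀ g : H, ∀ t ∈ T, ⟪g, K t⟫_ℝ = ι g t)
    (hint : ∀ g, IntegrableOn (ι g) S μ) (hkL : KernelMapsLinftyToL1 μ T k) {C : ℝ}
    (hC0 : 0 ≤ C)
    (hC : ∀ u, MemLp u ∞ μ →
      ∫ t in T, |∫ s in T, u s * k t s ∂μ| ∂μ ≤ C * (eLpNorm u ∞ μ).toReal)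
    (g : H) : ∫ t in S, ‖ι g t‖ ∂μ ≤ ‖g‖ * √C := by
  obtain ⟨σ, hσ, hσ1, hσg⟩ := exists_norm_le_one_mul_eq_norm (hint g).aemeasurable
  obtain ⟨h, hinner, hιh⟩ := exists_inner_eq_integral_mul_of_reproducing hS hST ι K hK hrep hint
    (memLp_top_of_bound hσ 1 (ae_of_all _ hσ1))
  have hw1 : ∀ s, ‖S.indicator σ s‖ ≤ 1 := fun s =>
    (norm_indicator_le_norm_self σ s).trans (hσ1 s)
  have hw : MemLp (S.indicator σ) ∞ μ :=
    memLp_top_of_bound ((aestronglyMeasurable_indicator_iff hS).mpr hσ) 1 (ae_of_all _ hw1)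
  have hιh' : ∀ t ∈ T, ι h t = ∫ s in T, S.indicator σ s * k t s ∂μ := fun t ht => by
    simp_rw [← indicator_mul_left]
    rw [hιh t ht, setIntegral_indicator hS, inter_eq_self_of_subset_right hST]
  have hnorm : ‖h‖ ^ 2 ≤ C := calc
    ‖h‖ ^ 2 = ∫ s in S, σ s * ι h s ∂μ := by rw [← real_inner_self_eq_norm_sq, hinner]
    _ ≤ 1 * ∫ s in S, ‖ι h s‖ ∂μ :=
      (le_abs_self _).trans (norm_integral_mul_le_of_ae_norm_le (ae_of_all _ hσ1) (hint h))
    _ ≤ ∫ t in T, |∫ s in T, S.indicator σ s * k t s ∂μ| ∂μ := by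
      rw [one_mul]
      have hιhT : IntegrableOn (fun t => ‖ι h t‖) T μ :=
        IntegrableOn.congr_fun (hkL _ hw).2 (fun t ht => by rw [Real.norm_eq_abs, hιh' t ht]) hT
      refine (setIntegral_mono_set hιhT (ae_of_all _ fun _ => norm_nonneg _)
        hST.eventuallyLE).trans_eq (setIntegral_congr_fun hT fun t ht => ?_)
      rw [Real.norm_eq_abs, hιh' t ht]
    _ ≤ C * (eLpNorm (S.indicator σ) ∞ μ).toReal := hC _ hw
    _ ≤ C := by
      refine mul_le_of_le_one_right hC0 (ENNReal.toReal_le_of_le_ofReal zero_le_one ?_)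
      rw [eLpNorm_exponent_top]
      exact eLpNormEssSup_le_of_ae_bound (ae_of_all _ hw1)
  calc ∫ t in S, ‖ι g t‖ ∂μ = ⟪g, h⟫_ℝ := by
        rw [hinner]
        exact setIntegral_congr_fun hS fun s _ => (hσg s).symm
    _ ≤ ‖g‖ * ‖h‖ := real_inner_le_norm g h
    _ ≤ ‖g‖ * √C := by gcongr; exact Real.le_sqrt_of_sq_le hnorm

end Kernel

theorem integrableOn_Ici_of_kernelMapsLinftyToL1 {H : Type*} [NormedAddCommGroup H]
    [InnerProductSpace ℝ H] [CompleteSpace H] {k : ℝ → ℝ → ℝ}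
    (hcont : ContinuousOn (fun p : ℝ × ℝ => k p.1 p.2) (Ici 0 ×ˢ Ici 0))
    (ι : H →ₗ[ℝ] ℝ → ℝ) (K : ℝ → H)
    (hK : ∀ t ∈ Ici (0:ℝ), ∀ s ∈ Ici (0:ℝ), ι (K t) s = k t s)
    (hrep : ∀ g : H, ∀ t ∈ Ici (0:ℝ), ⟪g, K t⟫_ℝ = ι g t)
    (hkL : KernelMapsLinftyToL1 volume (Ici 0) k) (g : H) : IntegrableOn (ι g) (Ici 0) := by
  have hKc : ContinuousOn K (Ici 0) := continuousOn_of_continuousOn_inner <|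
    hcont.congr fun p hp => by rw [hrep _ _ hp.2, hK _ hp.1 _ hp.2]
  have hint : ∀ (x : H) (b : ℝ), IntegrableOn (ι x) (Ioc 0 b) := fun x b =>
    (((continuousOn_const.inner hKc).congr fun t ht => (hrep x t ht).symm).mono
      Icc_subset_Ici_self).integrableOn_Icc.mono_set Ioc_subset_Icc_self
  have hk : AEStronglyMeasurable (fun p : ℝ × ℝ => k p.1 p.2)
      ((volume.restrict (Ici 0)).prod (volume.restrict (Ici 0))) := by
    rw [Measure.prod_restrict, ← Measure.volume_eq_prod]
    exact hcont.aestronglyMeasurable (measurableSet_Ici.prod measurableSet_Ici)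
  obtain ⟨C, hC0, hC⟩ := exists_integral_abs_integral_mul_le measurableSet_Ici hk hkL
  rw [integrableOn_Ici_iff_integrableOn_Ioi]
  refine integrableOn_Ioi_of_intervalIntegral_norm_bounded (‖g‖ * √C) 0 (fun n : ℕ => hint g n)
    tendsto_natCast_atTop_atTop (Eventually.of_forall fun n => ?_)
  rw [intervalIntegral.integral_of_le n.cast_nonneg]
  exact integral_norm_le_of_reproducing measurableSet_Ioc measurableSet_Ici
    (Ioc_subset_Ioi_self.trans Ioi_subset_Ici_self) ι K hK hrep (fun x => hint x n) hkL hC0 hC g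

theorem stmt_1_general
    {H : Type*} [NormedAddCommGroup H] [InnerProductSpace ℝ H] [CompleteSpace H]
    (k : ℝ → ℝ → ℝ)
    (hcont : ContinuousOn (fun p : ℝ × ℝ => k p.1 p.2) (Ici 0 ×ˢ Ici 0))
    (ι : H →ₗ[ℝ] (ℝ → ℝ))
    (K : ℝ → H) (hK : ∀ t ∈ Ici (0:ℝ), ∀ s ∈ Ici (0:ℝ), ι (K t) s = k t s)
    (hrep : ∀ g : H, ∀ t ∈ Ici (0:ℝ), ⟪g, K t⟫_ℝ = ι g t) :
    (∀ g : H, IntegrableOn (ι g) (Ici 0)) ↔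
      (∀ u : ℝ → ℝ, MemLp u ⊤ volume →
        (∀ t ∈ Ici (0:ℝ), IntegrableOn (fun s => u s * k t s) (Ici 0)) ∧
          IntegrableOn (fun t => |∫ s in Ici (0:ℝ), u s * k t s|) (Ici 0)) :=
  ⟨fun hL1 => kernelMapsLinftyToL1_of_integrableOn measurableSet_Ici ι K hK hrep hL1,
    fun hkL => integrableOn_Ici_of_kernelMapsLinftyToL1 hcont ι K hK hrep hkL⟩

/-- For a Mercer kernel `k` on `𝕋 = [0,∞)` with RKHS `H`, the inclusion
`H ⊆ L¹([0,∞))` holds iff for every essentially bounded measurable `u : ℝ → ℝ` the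
double expression `∫_t |∫_s u s * k t s ds| dt` over `[0,∞)` is finite. -/
theorem stmt_1
    {H : Type*} [NormedAddCommGroup H] [InnerProductSpace ℝ H] [CompleteSpace H]
    (k : ℝ → ℝ → ℝ)
    (hcont : ContinuousOn (fun p : ℝ × ℝ => k p.1 p.2) (Ici 0 ×ˢ Ici 0))
    (hsymm : ∀ s ∈ Ici (0:ℝ), ∀ t ∈ Ici (0:ℝ), k s t = k t s)
    (hpsd : ∀ (n : ℕ) (t : Fin n → ℝ), (∀ i, 0 ≤ t i) →
      ∀ a : Fin n → ℝ, 0 ≤ ∑ i, ∑ j, a i * a j * k (t i) (t j))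
    (ι : H →ₗ[ℝ] (ℝ → ℝ))
    (hι : ∀ g₁ g₂ : H, (∀ t ∈ Ici (0:ℝ), ι g₁ t = ι g₂ t) → g₁ = g₂)
    (K : ℝ → H) (hK : ∀ t ∈ Ici (0:ℝ), ∀ s ∈ Ici (0:ℝ), ι (K t) s = k t s)
    (hrep : ∀ g : H, ∀ t ∈ Ici (0:ℝ), ⟪g, K t⟫_ℝ = ι g t) :
    (∀ g : H, IntegrableOn (ι g) (Ici 0)) ↔
      (∀ u : ℝ → ℝ, MemLp u ⊤ volume →
        (∀ t ∈ Ici (0:ℝ), IntegrableOn (fun s => u s * k t s) (Ici 0)) ∧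
          IntegrableOn (fun t => |∫ s in Ici (0:ℝ), u s * k t s|) (Ici 0)) :=
  stmt_1_general k hcont ι K hK hrep
end

section
/- Let k be an integrable Mercer kernel on 𝕋 = [0,∞) with RKHS H, and let 0 ≤ a < b < ∞. Then the function f : 𝕋 → ℝ defined by f(s) = ∫_a^b k(s,t) dt belongs to H, and its norm satisfies ‖f‖_H² = ∫_a^b ∫_a^b k(s,t) ds dt. -/
open scoped InnerProductSpace
open MeasureTheory Set

/-- For an integrable Mercer kernel `k` on `[0,∞)` with RKHS `H` and
`0 ≤ a < b < ∞`, the function `s ↦ ∫_a^b k(s,t) dt` belongs to `H` and its squared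
norm equals `∫_a^b ∫_a^b k(s,t) ds dt`. -/
theorem stmt_3
    {H : Type*} [NormedAddCommGroup H] [InnerProductSpace ℝ H] [CompleteSpace H]
    (k : ℝ → ℝ → ℝ)
    (hcont : ContinuousOn (fun p : ℝ × ℝ => k p.1 p.2) (Ici 0 ×ˢ Ici 0))
    (hsymm : ∀ s ∈ Ici (0:ℝ), ∀ t ∈ Ici (0:ℝ), k s t = k t s)
    (hpsd : ∀ (n : ℕ) (t : Fin n → ℝ), (∀ i, 0 ≤ t i) →
      ∀ a : Fin n → ℝ, 0 ≤ ∑ i, ∑ j, a i * a j * k (t i) (t j))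
    (hint : IntegrableOn (fun p : ℝ × ℝ => k p.1 p.2) (Ici 0 ×ˢ Ici 0))
    (ι : H →ₗ[ℝ] (ℝ → ℝ))
    (hι : ∀ g₁ g₂ : H, (∀ t ∈ Ici (0:ℝ), ι g₁ t = ι g₂ t) → g₁ = g₂)
    (K : ℝ → H) (hK : ∀ t ∈ Ici (0:ℝ), ∀ s ∈ Ici (0:ℝ), ι (K t) s = k t s)
    (hrep : ∀ g : H, ∀ t ∈ Ici (0:ℝ), ⟪g, K t⟫_ℝ = ι g t)
    (a b : ℝ) (ha : 0 ≤ a) (hab : a < b) :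
    ∃ f : H, (∀ s ∈ Ici (0:ℝ), ι f s = ∫ t in Icc a b, k s t) ∧
      ‖f‖ ^ 2 = ∫ t in Icc a b, ∫ s in Icc a b, k s t := by
  have hsub : Icc a b ⊆ Ici (0:ℝ) := fun x hx => le_trans ha hx.1
  have hKK : ∀ s ∈ Ici (0:ℝ), ∀ t ∈ Ici (0:ℝ), ⟪K s, K t⟫_ℝ = k s t := by
    intro s hs t ht
    rw [hrep (K s) t ht, hK s hs t ht]
  -- continuity of K on Ici 0
  have hKcont : ContinuousOn K (Ici 0) := by
    intro t₀ ht₀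
    have h1 : ContinuousOn (fun t : ℝ => k t t) (Ici 0) :=
      hcont.comp (continuous_id.prodMk continuous_id).continuousOn (fun x hx => ⟨hx, hx⟩)
    have h2 : ContinuousOn (fun t : ℝ => k t t₀) (Ici 0) :=
      hcont.comp (continuous_id.prodMk continuous_const).continuousOn (fun x hx => ⟨hx, ht₀⟩)
    have hq : ContinuousOn (fun t : ℝ => k t t - 2 * k t t₀ + k t₀ t₀) (Ici 0) :=
      (h1.sub (continuousOn_const.mul h2)).add continuousOn_const
    have hnorm : ∀ t ∈ Ici (0:ℝ), ‖K t - K t₀‖ ^ 2 = k t t - 2 * k t t₀ + k t₀ t₀ := by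
      intro t ht
      rw [← real_inner_self_eq_norm_sq, real_inner_sub_sub_self,
        hKK t ht t ht, hKK t ht t₀ ht₀, hKK t₀ ht₀ t₀ ht₀]
    have hsq : Filter.Tendsto (fun t => ‖K t - K t₀‖ ^ 2) (nhdsWithin t₀ (Ici 0)) (nhds 0) := by
      have := (hq t₀ ht₀)
      have h0 : k t₀ t₀ - 2 * k t₀ t₀ + k t₀ t₀ = 0 := by ring
      rw [ContinuousWithinAt, h0] at this
      refine this.congr' ?_
      filter_upwards [self_mem_nhdsWithin] with t ht using (hnorm t ht).symm
    have h3 : Filter.Tendsto (fun t => ‖K t - K t₀‖) (nhdsWithin t₀ (Ici 0)) (nhds 0) := by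
      have := hsq.sqrt
      rw [Real.sqrt_zero] at this
      refine this.congr (fun t => ?_)
      rw [Real.sqrt_sq (norm_nonneg _)]
    exact tendsto_iff_norm_sub_tendsto_zero.mpr h3
  have hKint : IntegrableOn K (Icc a b) := (hKcont.mono hsub).integrableOn_Icc
  set f : H := ∫ t in Icc a b, K t with hf
  have hmeas : MeasurableSet (Icc a b) := measurableSet_Icc
  have hιf : ∀ s ∈ Ici (0:ℝ), ι f s = ∫ t in Icc a b, k s t := by
    intro s hs
    rw [← hrep f s hs, real_inner_comm, hf, ← integral_inner hKint (K s)]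
    refine setIntegral_congr_fun hmeas (fun t ht => ?_)
    exact hKK s hs t (hsub ht)
  refine ⟨f, hιf, ?_⟩
  rw [← real_inner_self_eq_norm_sq]
  calc ⟪f, f⟫_ℝ = ∫ t in Icc a b, ⟪f, K t⟫_ℝ := by
        have h : ⟪f, f⟫_ℝ = ⟪f, ∫ t in Icc a b, K t⟫_ℝ := by rw [← hf]
        rw [h, ← integral_inner hKint f]
    _ = ∫ t in Icc a b, ∫ s in Icc a b, k s t := by
        refine setIntegral_congr_fun hmeas (fun t ht => ?_)
        rw [hrep f t (hsub ht), hιf t (hsub ht)]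
        refine setIntegral_congr_fun hmeas (fun s hs => ?_)
        exact hsymm t (hsub ht) s (hsub hs)
end

section
/- Let k be an integrable Mercer kernel on 𝕋 = [0,∞) with RKHS H, let 0 ≤ a < b < ∞, and let f ∈ H be the element given by f(s) = ∫_a^b k(s,t) dt. Then for every g ∈ H one has ∫_a^b g(t) dt = ⟨f, g⟩_H. -/
open scoped InnerProductSpace
open MeasureTheory Set Filter Topology

/-! The kernel sections `K t` form a continuous curve in `H`, because
`‖K s - K t‖² = k s s - k s t - k t s + k t t` and `k` is continuous. Hence `K` is
Bochner integrable on `[a, b]`, and integrating the reproducing property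
`g t = ⟪g, K t⟫` over `[a, b]` gives `∫ g = ⟪g, ∫ K⟫`. Applied to `g = K s` this shows that
`∫ K` has the same values as `f`, so `f = ∫ K`, and applied to an arbitrary `g` it is
the claim. -/

section

variable {H : Type*} [NormedAddCommGroup H] [InnerProductSpace ℝ H]

theorem norm_sub_sq_eq_of_inner_eq {α : Type*} {K : α → H} {k : α → α → ℝ} {S : Set α}
    (hinner : ∀ s ∈ S, ∀ t ∈ S, ⟪K s, K t⟫_ℝ = k s t) {s t : α} (hs : s ∈ S) (ht : t ∈ S) :
    ‖K s - K t‖ ^ 2 = k s s - k s t - k t s + k t t := by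
  rw [← real_inner_self_eq_norm_sq, inner_sub_left, inner_sub_right, inner_sub_right,
    hinner s hs s hs, hinner s hs t ht, hinner t ht s hs, hinner t ht t ht]
  ring

theorem continuousOn_of_inner_eq {α : Type*} [TopologicalSpace α] {K : α → H}
    {k : α → α → ℝ} {S : Set α} (hk : ContinuousOn (fun p : α × α => k p.1 p.2) (S ×ˢ S))
    (hinner : ∀ s ∈ S, ∀ t ∈ S, ⟪K s, K t⟫_ℝ = k s t) : ContinuousOn K S := by
  intro t ht
  have hdiag : ContinuousOn (fun s => k s s - k s t - k t s + k t t) S := by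
    have hss : ContinuousOn (fun s => k s s) S :=
      hk.comp (continuousOn_id.prodMk continuousOn_id) fun s hs => ⟨hs, hs⟩
    have hst : ContinuousOn (fun s => k s t) S :=
      hk.comp (continuousOn_id.prodMk continuousOn_const) fun s hs => ⟨hs, ht⟩
    have hts : ContinuousOn (fun s => k t s) S :=
      hk.comp (continuousOn_const.prodMk continuousOn_id) fun s hs => ⟨ht, hs⟩
    exact ((hss.sub hst).sub hts).add continuousOn_const
  have hsqrt : Tendsto (fun s => √(k s s - k s t - k t s + k t t)) (𝓝[S] t) (𝓝 0) := by
    simpa using ((hdiag t ht).sqrt).tendsto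
  refine tendsto_iff_norm_sub_tendsto_zero.2 (hsqrt.congr' ?_)
  filter_upwards [self_mem_nhdsWithin] with s hs
  rw [← norm_sub_sq_eq_of_inner_eq hinner hs ht, Real.sqrt_sq (norm_nonneg _)]

theorem setIntegral_eq_inner_setIntegral [CompleteSpace H] {α : Type*} [MeasurableSpace α] {μ : Measure α}
    {A : Set α} (hA : MeasurableSet A) {K : α → H} (hK : IntegrableOn K A μ) {φ : α → ℝ}
    {g : H} (hφ : ∀ t ∈ A, ⟪g, K t⟫_ℝ = φ t) :
    ∫ t in A, φ t ∂μ = ⟪g, ∫ t in A, K t ∂μ⟫_ℝ :=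
  (setIntegral_congr_fun hA hφ).symm.trans (integral_inner hK g)

end

theorem stmt_4_general
    {H : Type*} [NormedAddCommGroup H] [InnerProductSpace ℝ H] [CompleteSpace H]
    (k : ℝ → ℝ → ℝ)
    (hcont : ContinuousOn (fun p : ℝ × ℝ => k p.1 p.2) (Ici 0 ×ˢ Ici 0))
    (ι : H →ₗ[ℝ] (ℝ → ℝ))
    (hι : ∀ g₁ g₂ : H, (∀ t ∈ Ici (0:ℝ), ι g₁ t = ι g₂ t) → g₁ = g₂)
    (K : ℝ → H) (hK : ∀ t ∈ Ici (0:ℝ), ∀ s ∈ Ici (0:ℝ), ι (K t) s = k t s)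
    (hrep : ∀ g : H, ∀ t ∈ Ici (0:ℝ), ⟪g, K t⟫_ℝ = ι g t)
    (a b : ℝ) (ha : 0 ≤ a)
    (f : H) (hf : ∀ s ∈ Ici (0:ℝ), ι f s = ∫ t in Icc a b, k s t) :
    ∀ g : H, ∫ t in Icc a b, ι g t = ⟪f, g⟫_ℝ := by
  have hsub : Icc a b ⊆ Ici 0 := fun t ht => ha.trans ht.1
  have hinner : ∀ s ∈ Ici (0:ℝ), ∀ t ∈ Ici (0:ℝ), ⟪K s, K t⟫_ℝ = k s t :=
    fun s hs t ht => (hrep (K s) t ht).trans (hK s hs t ht)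
  have hKint : IntegrableOn K (Icc a b) :=
    ((continuousOn_of_inner_eq hcont hinner).mono hsub).integrableOn_Icc
  have hf_eq : f = ∫ t in Icc a b, K t := hι _ _ fun s hs => by
    rw [hf s hs, ← hrep _ s hs, real_inner_comm]
    exact setIntegral_eq_inner_setIntegral measurableSet_Icc hKint
      fun t ht => hinner s hs t (hsub ht)
  intro g
  rw [hf_eq, real_inner_comm]
  exact setIntegral_eq_inner_setIntegral measurableSet_Icc hKint fun t ht => hrep g t (hsub ht)

/-- For an integrable Mercer kernel `k` on `[0,∞)` with RKHS `H`,
`0 ≤ a < b < ∞`, and `f ∈ H` with `f(s) = ∫_a^b k(s,t) dt`, every `g ∈ H` satisfies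
`∫_a^b g(t) dt = ⟪f, g⟫`. -/
theorem stmt_4
    {H : Type*} [NormedAddCommGroup H] [InnerProductSpace ℝ H] [CompleteSpace H]
    (k : ℝ → ℝ → ℝ)
    (hcont : ContinuousOn (fun p : ℝ × ℝ => k p.1 p.2) (Ici 0 ×ˢ Ici 0))
    (hsymm : ∀ s ∈ Ici (0:ℝ), ∀ t ∈ Ici (0:ℝ), k s t = k t s)
    (hpsd : ∀ (n : ℕ) (t : Fin n → ℝ), (∀ i, 0 ≤ t i) →
      ∀ a : Fin n → ℝ, 0 ≤ ∑ i, ∑ j, a i * a j * k (t i) (t j))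
    (hint : IntegrableOn (fun p : ℝ × ℝ => k p.1 p.2) (Ici 0 ×ˢ Ici 0))
    (ι : H →ₗ[ℝ] (ℝ → ℝ))
    (hι : ∀ g₁ g₂ : H, (∀ t ∈ Ici (0:ℝ), ι g₁ t = ι g₂ t) → g₁ = g₂)
    (K : ℝ → H) (hK : ∀ t ∈ Ici (0:ℝ), ∀ s ∈ Ici (0:ℝ), ι (K t) s = k t s)
    (hrep : ∀ g : H, ∀ t ∈ Ici (0:ℝ), ⟪g, K t⟫_ℝ = ι g t)
    (a b : ℝ) (ha : 0 ≤ a) (hab : a < b)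
    (f : H) (hf : ∀ s ∈ Ici (0:ℝ), ι f s = ∫ t in Icc a b, k s t) :
    ∀ g : H, ∫ t in Icc a b, ι g t = ⟪f, g⟫_ℝ :=
  stmt_4_general k hcont ι hι K hK hrep a b ha f hf
end

section
/- Let k be an integrable Mercer kernel on 𝕋 = [0,∞) with RKHS H, assume every element of H is Lebesgue integrable on 𝕋, and let a ≥ 0. Then the function f : 𝕋 → ℝ defined by f(s) = ∫_a^∞ k(s,t) dt belongs to H, its norm satisfies ‖f‖_H² = ∫_a^∞ ∫_a^∞ k(s,t) ds dt, and for every g ∈ H one has ∫_a^∞ g(t) dt = ⟨f, g⟩_H. -/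
open scoped InnerProductSpace
open MeasureTheory Set

/-- For an integrable Mercer kernel `k` on `[0,∞)` with RKHS `H` whose
elements are all Lebesgue integrable on `[0,∞)`, and `a ≥ 0`, the function
`s ↦ ∫_a^∞ k(s,t) dt` belongs to `H`, its squared norm is `∫_a^∞ ∫_a^∞ k(s,t) ds dt`,
and `∫_a^∞ g(t) dt = ⟪f, g⟫` for every `g ∈ H`. -/
theorem stmt_5
    {H : Type*} [NormedAddCommGroup H] [InnerProductSpace ℝ H] [CompleteSpace H]
    (k : ℝ → ℝ → ℝ)
    (hcont : ContinuousOn (fun p : ℝ × ℝ => k p.1 p.2) (Ici 0 ×ˢ Ici 0))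
    (hsymm : ∀ s ∈ Ici (0:ℝ), ∀ t ∈ Ici (0:ℝ), k s t = k t s)
    (hpsd : ∀ (n : ℕ) (t : Fin n → ℝ), (∀ i, 0 ≤ t i) →
      ∀ a : Fin n → ℝ, 0 ≤ ∑ i, ∑ j, a i * a j * k (t i) (t j))
    (hint : IntegrableOn (fun p : ℝ × ℝ => k p.1 p.2) (Ici 0 ×ˢ Ici 0))
    (ι : H →ₗ[ℝ] (ℝ → ℝ))
    (hι : ∀ g₁ g₂ : H, (∀ t ∈ Ici (0:ℝ), ι g₁ t = ι g₂ t) → g₁ = g₂)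
    (K : ℝ → H) (hK : ∀ t ∈ Ici (0:ℝ), ∀ s ∈ Ici (0:ℝ), ι (K t) s = k t s)
    (hrep : ∀ g : H, ∀ t ∈ Ici (0:ℝ), ⟪g, K t⟫_ℝ = ι g t)
    (hL1 : ∀ g : H, IntegrableOn (ι g) (Ici 0))
    (a : ℝ) (ha : 0 ≤ a) :
    ∃ f : H, (∀ s ∈ Ici (0:ℝ), ι f s = ∫ t in Ici a, k s t) ∧
      ‖f‖ ^ 2 = ∫ t in Ici a, ∫ s in Ici a, k s t ∧
      ∀ g : H, ∫ t in Ici a, ι g t = ⟪f, g⟫_ℝ := by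
  classical
  have hIa : Ici a ⊆ Ici (0:ℝ) := Ici_subset_Ici.mpr ha
  set μ : Measure ℝ := volume.restrict (Ici a) with hμ
  have hInt : ∀ g : H, Integrable (ι g) μ := fun g => (hL1 g).mono_set hIa
  -- The map into L¹
  let T : H →ₗ[ℝ] (Lp ℝ 1 μ) :=
    { toFun := fun g => (hInt g).toL1 _
      map_add' := fun g₁ g₂ => by
        simp only [map_add]
        exact Integrable.toL1_add _ _ (hInt g₁) (hInt g₂)
      map_smul' := fun c g => by
        simp only [LinearMap.map_smul, RingHom.id_apply]
        exact Integrable.toL1_smul _ (hInt g) c }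
  have hTcoe : ∀ g : H, (T g : ℝ → ℝ) =ᵐ[μ] ι g := fun g => Integrable.coeFn_toL1 (hInt g)
  -- Continuity via the closed graph theorem
  have hTcont : Continuous T := by
    apply T.continuous_of_seq_closed_graph
    intro u x y hu hTu
    have hmeas : TendstoInMeasure μ (fun n => ((T (u n) : Lp ℝ 1 μ) : ℝ → ℝ))
        Filter.atTop (y : ℝ → ℝ) := tendstoInMeasure_of_tendsto_Lp hTu
    obtain ⟨ns, hmono, hns⟩ := hmeas.exists_seq_tendsto_ae
    have hmem : ∀ᵐ t ∂μ, t ∈ Ici a := ae_restrict_mem measurableSet_Ici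
    have hall : ∀ᵐ t ∂μ, ∀ m, (T (u m) : ℝ → ℝ) t = ι (u m) t :=
      MeasureTheory.ae_all_iff.mpr fun m => hTcoe (u m)
    have hyeq : (y : ℝ → ℝ) =ᵐ[μ] ι x := by
      filter_upwards [hns, hmem, hall] with t h1 h2 h3
      have ht0 : t ∈ Ici (0:ℝ) := hIa h2
      have hsub : Filter.Tendsto (fun i => u (ns i)) Filter.atTop (nhds x) :=
        hu.comp hmono.tendsto_atTop
      have hpt : Filter.Tendsto (fun i => ι (u (ns i)) t) Filter.atTop (nhds (ι x t)) := by
        have h' : Filter.Tendsto (fun i => ⟪u (ns i), K t⟫_ℝ) Filter.atTop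
            (nhds (⟪x, K t⟫_ℝ)) := hsub.inner tendsto_const_nhds
        simpa only [hrep _ t ht0] using h'
      have h1' : Filter.Tendsto (fun i => ι (u (ns i)) t) Filter.atTop (nhds ((y : ℝ → ℝ) t)) := by
        refine h1.congr fun i => ?_
        exact h3 (ns i)
      exact tendsto_nhds_unique h1' hpt
    have : (L1.integrable_coeFn y).toL1 (y : ℝ → ℝ) = (hInt x).toL1 (ι x) :=
      (Integrable.toL1_eq_toL1_iff _ _ _ _).mpr hyeq
    rw [Integrable.toL1_coeFn] at this
    exact this
  -- The continuous linear functional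
  let Tc : H →L[ℝ] Lp ℝ 1 μ := ⟨T, hTcont⟩
  let L : H →L[ℝ] ℝ := (L1.integralCLM).comp Tc
  have hLval : ∀ g : H, L g = ∫ t in Ici a, ι g t := by
    intro g
    have h1 : L g = L1.integral (T g) := (L1.integral_eq _).symm
    rw [h1, L1.integral_eq_integral]
    exact integral_congr_ae (hTcoe g)
  set f : H := (InnerProductSpace.toDual ℝ H).symm L with hf
  have key : ∀ g : H, ⟪f, g⟫_ℝ = ∫ t in Ici a, ι g t := by
    intro g
    rw [hf, InnerProductSpace.toDual_symm_apply]
    exact hLval g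
  have part1 : ∀ s ∈ Ici (0:ℝ), ι f s = ∫ t in Ici a, k s t := by
    intro s hs
    rw [← hrep f s hs, key (K s)]
    refine setIntegral_congr_fun measurableSet_Ici fun t ht => ?_
    exact hK s hs t (hIa ht)
  refine ⟨f, part1, ?_, fun g => (key g).symm⟩
  have : ⟪f, f⟫_ℝ = ∫ t in Ici a, ∫ s in Ici a, k s t := by
    rw [key f]
    refine setIntegral_congr_fun measurableSet_Ici fun t ht => ?_
    have ht0 : t ∈ Ici (0:ℝ) := hIa ht
    rw [part1 t ht0]
    refine setIntegral_congr_fun measurableSet_Ici fun s hs => ?_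
    exact hsymm t ht0 s (hIa hs)
  rw [← this, real_inner_self_eq_norm_sq]
end

section
/- Let k be an integrable Mercer kernel on ℤ≥0 with RKHS H, assume every element of H is absolutely summable, and let m ∈ ℤ≥0. Then the series Σ_{t ≥ m} k(·,t) converges in H to an element f, its norm satisfies ‖f‖_H² = Σ_{s ≥ m} Σ_{t ≥ m} k(s,t), and for every g ∈ H one has Σ_{t ≥ m} g(t) = ⟨f, g⟩_H. -/
/-! The partial sums of `∑ₜ K (m + t)` have squared norms `∑_{s,t ∈ F} k (m + s) (m + t)`, so
absolute summability of the kernel gives the Cauchy criterion for the series in `H`. Once the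
series converges to `f`, continuity of the inner product and the reproducing property turn
`⟪g, f⟫` into `∑ₜ g (m + t)` and `‖f‖²` into the double sum of the kernel. -/

open scoped InnerProductSpace

section InnerProductSpace

variable {E ι : Type*} [NormedAddCommGroup E] [InnerProductSpace ℝ E]

theorem HasSum.inner_left {v : ι → E} {f : E} (hf : HasSum v f) (g : E) :
    HasSum (fun i => ⟪g, v i⟫_ℝ) ⟪g, f⟫_ℝ :=
  (innerSL ℝ g).hasSum hf

theorem HasSum.norm_sq_eq_tsum_tsum_inner {v : ι → E} {f : E} (hf : HasSum v f) :
    ‖f‖ ^ 2 = ∑' i, ∑' j, ⟪v i, v j⟫_ℝ := by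
  rw [← real_inner_self_eq_norm_sq, ← (hf.inner_left f).tsum_eq]
  refine tsum_congr fun i => ?_
  rw [real_inner_comm, (hf.inner_left (v i)).tsum_eq]

theorem norm_sum_sq_eq_sum_sum_inner (v : ι → E) (s : Finset ι) :
    ‖∑ i ∈ s, v i‖ ^ 2 = ∑ i ∈ s, ∑ j ∈ s, ⟪v i, v j⟫_ℝ := by
  rw [← real_inner_self_eq_norm_sq, sum_inner]
  simp only [inner_sum]

theorem summable_of_summable_inner [CompleteSpace E] {v : ι → E}
    (hv : Summable fun p : ι × ι => ⟪v p.1, v p.2⟫_ℝ) : Summable v := by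
  classical
  rw [summable_iff_vanishing_norm]
  intro ε hε
  obtain ⟨S, hS⟩ := summable_iff_vanishing_norm.mp hv (ε ^ 2) (by positivity)
  refine ⟨S.image Prod.fst, fun t ht => ?_⟩
  have hdisj : Disjoint (t ×ˢ t) S := by
    rw [Finset.disjoint_left]
    rintro p hp hpS
    exact Finset.disjoint_left.mp ht (Finset.mem_product.mp hp).1 (Finset.mem_image_of_mem _ hpS)
  have hsq : ‖∑ i ∈ t, v i‖ ^ 2 < ε ^ 2 :=
    calc ‖∑ i ∈ t, v i‖ ^ 2 = ∑ p ∈ t ×ˢ t, ⟪v p.1, v p.2⟫_ℝ := by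
          rw [norm_sum_sq_eq_sum_sum_inner, Finset.sum_product]
      _ ≤ ‖∑ p ∈ t ×ˢ t, ⟪v p.1, v p.2⟫_ℝ‖ := Real.le_norm_self _
      _ < ε ^ 2 := hS _ hdisj
  exact lt_of_pow_lt_pow_left₀ 2 hε.le hsq

end InnerProductSpace

theorem stmt_7_general
    {H : Type*} [NormedAddCommGroup H] [InnerProductSpace ℝ H] [CompleteSpace H]
    (k : ℕ → ℕ → ℝ)
    (hint : Summable fun p : ℕ × ℕ => |k p.1 p.2|)
    (ι : H →ₗ[ℝ] (ℕ → ℝ))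
    (K : ℕ → H) (hK : ∀ t s, ι (K t) s = k t s)
    (hrep : ∀ (g : H) (t : ℕ), ⟪g, K t⟫_ℝ = ι g t)
    (m : ℕ) :
    ∃ f : H, HasSum (fun t : ℕ => K (m + t)) f ∧
      ‖f‖ ^ 2 = (∑' s : ℕ, ∑' t : ℕ, k (m + s) (m + t)) ∧
      ∀ g : H, ∑' t : ℕ, ι g (m + t) = ⟪f, g⟫_ℝ := by
  have hkernel : ∀ s t, ⟪K s, K t⟫_ℝ = k s t := fun s t => by rw [hrep, hK]
  have hshift : Summable fun p : ℕ × ℕ => ⟪K (m + p.1), K (m + p.2)⟫_ℝ := by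
    have hinj : Function.Injective (Prod.map (m + ·) (m + ·) : ℕ × ℕ → ℕ × ℕ) :=
      (add_right_injective m).prodMap (add_right_injective m)
    simpa only [hkernel, Prod.map_fst, Prod.map_snd] using (hint.comp_injective hinj).of_abs
  obtain ⟨f, hf⟩ := summable_of_summable_inner (v := fun t => K (m + t)) hshift
  refine ⟨f, hf, ?_, fun g => ?_⟩
  · simp only [hf.norm_sq_eq_tsum_tsum_inner, hkernel]
  · rw [real_inner_comm, ← (hf.inner_left g).tsum_eq]
    simp only [hrep]

/-- For an integrable Mercer kernel `k` on `ℤ≥0` with RKHS `H` whose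
elements are all absolutely summable, and `m ∈ ℤ≥0`, the series `∑_{t ≥ m} k(·,t)`
converges in `H` to some `f` with `‖f‖² = ∑_{s ≥ m} ∑_{t ≥ m} k(s,t)` and
`∑_{t ≥ m} g(t) = ⟪f, g⟫` for all `g ∈ H`. -/
theorem stmt_7
    {H : Type*} [NormedAddCommGroup H] [InnerProductSpace ℝ H] [CompleteSpace H]
    (k : ℕ → ℕ → ℝ)
    (hsymm : ∀ s t, k s t = k t s)
    (hpsd : ∀ (n : ℕ) (t : Fin n → ℕ) (a : Fin n → ℝ),
      0 ≤ ∑ i, ∑ j, a i * a j * k (t i) (t j))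
    (hint : Summable fun p : ℕ × ℕ => |k p.1 p.2|)
    (ι : H →ₗ[ℝ] (ℕ → ℝ)) (hι : Function.Injective ι)
    (K : ℕ → H) (hK : ∀ t s, ι (K t) s = k t s)
    (hrep : ∀ (g : H) (t : ℕ), ⟪g, K t⟫_ℝ = ι g t)
    (hl1 : ∀ g : H, Summable fun t => |ι g t|)
    (m : ℕ) :
    ∃ f : H, HasSum (fun t : ℕ => K (m + t)) f ∧
      ‖f‖ ^ 2 = (∑' s : ℕ, ∑' t : ℕ, k (m + s) (m + t)) ∧
      ∀ g : H, ∑' t : ℕ, ι g (m + t) = ⟪f, g⟫_ℝ :=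
  stmt_7_general k hint ι K hK hrep m
end

section
/- Let k be an integrable Mercer kernel on ℤ≥0 with RKHS H, assume every element of H is absolutely summable, let u : ℤ → ℝ be a bounded function, and let τ ∈ ℤ≥0. Then the function φ : ℤ≥0 → ℝ defined by φ(t) = Σ_{s∈ℤ≥0} k(t,s) u(τ − s) belongs to H, and for every g ∈ H the convolution functional satisfies L_u^τ(g) := Σ_{s∈ℤ≥0} g(s) u(τ − s) = ⟨φ, g⟩_H. In particular, the linear functional L_u^τ : H → ℝ is continuous (bounded). -/
/-!
The partial sums of the convolution series are finite combinations of the point evaluations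
`⟪·, K s⟫`, hence continuous functionals on `H`, and they converge pointwise because every
element of `H` is absolutely summable and `u` is bounded. By Banach–Steinhaus the limit
`L_u^τ` is continuous; `φ` is its Riesz representer, and the reproducing property evaluates
`φ` at `t` as `L_u^τ (k_t)`.
-/

open Filter
open scoped InnerProductSpace

namespace ContinuousLinearMap

variable {𝕜 E F α : Type*} [NontriviallyNormedField 𝕜]
  [AddCommGroup E] [Module 𝕜 E] [UniformSpace E] [IsUniformAddGroup E] [ContinuousSMul 𝕜 E]
  [BarrelledSpace 𝕜 E]
  [AddCommGroup F] [Module 𝕜 F] [UniformSpace F] [IsUniformAddGroup F] [ContinuousSMul 𝕜 F]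
  [PolynormableSpace 𝕜 F] [T2Space F] [Countable α]

noncomputable def tsumOfSummable (ℓ : α → E →L[𝕜] F) (hℓ : ∀ x, Summable fun i ↦ ℓ i x) :
    E →L[𝕜] F :=
  continuousLinearMapOfTendsto (l := atTop) (fun s : Finset α ↦ ∑ i ∈ s, ℓ i)
    (f := fun x ↦ ∑' i, ℓ i x)
    (tendsto_pi_nhds.2 fun x ↦ by simp only [sum_apply]; exact (hℓ x).hasSum)

@[simp]
theorem tsumOfSummable_apply (ℓ : α → E →L[𝕜] F) (hℓ : ∀ x, Summable fun i ↦ ℓ i x) (x : E) :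
    tsumOfSummable ℓ hℓ x = ∑' i, ℓ i x :=
  rfl

end ContinuousLinearMap

theorem summable_mul_of_summable_abs_of_abs_le {α : Type*} {f w : α → ℝ}
    (hf : Summable fun i ↦ |f i|) {C : ℝ} (hw : ∀ i, |w i| ≤ C) :
    Summable fun i ↦ f i * w i :=
  Summable.of_norm_bounded (hf.mul_right C) fun i ↦ by
    rw [Real.norm_eq_abs, abs_mul]
    exact mul_le_mul_of_nonneg_left (hw i) (abs_nonneg _)

theorem exists_inner_eq_tsum_inner_mul_of_summable {H α : Type*} [NormedAddCommGroup H]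
    [InnerProductSpace ℝ H] [CompleteSpace H] [Countable α] (K : α → H) (w : α → ℝ)
    (hsum : ∀ g : H, Summable fun s ↦ ⟪g, K s⟫_ℝ * w s) :
    ∃ φ : H, ∀ g : H, ⟪φ, g⟫_ℝ = ∑' s, ⟪g, K s⟫_ℝ * w s := by
  have hℓ : ∀ g : H, Summable fun s ↦ (w s • innerSL ℝ (K s)) g := fun g ↦ by
    simpa only [smul_apply, innerSL_apply_apply, smul_eq_mul, mul_comm,
      real_inner_comm] using hsum g
  refine ⟨(InnerProductSpace.toDual ℝ H).symm (.tsumOfSummable _ hℓ), fun g ↦ ?_⟩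
  simp only [InnerProductSpace.toDual_symm_apply, ContinuousLinearMap.tsumOfSummable_apply,
    smul_apply, innerSL_apply_apply, smul_eq_mul, mul_comm, real_inner_comm]

theorem stmt_9_general
    {H : Type*} [NormedAddCommGroup H] [InnerProductSpace ℝ H] [CompleteSpace H]
    (k : ℕ → ℕ → ℝ)
    (ι : H →ₗ[ℝ] (ℕ → ℝ))
    (K : ℕ → H) (hK : ∀ t s, ι (K t) s = k t s)
    (hrep : ∀ (g : H) (t : ℕ), ⟪g, K t⟫_ℝ = ι g t)
    (hl1 : ∀ g : H, Summable fun t => |ι g t|)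
    (u : ℤ → ℝ) (hu : ∃ C, ∀ s, |u s| ≤ C)
    (τ : ℕ) :
    ∃ φ : H,
      (∀ t : ℕ, ι φ t = ∑' s : ℕ, k t s * u (τ - s)) ∧
      (∀ g : H, ∑' s : ℕ, ι g s * u (τ - s) = ⟪φ, g⟫_ℝ) ∧
      ∃ C : ℝ, ∀ g : H, |∑' s : ℕ, ι g s * u (τ - s)| ≤ C * ‖g‖ := by
  obtain ⟨C, hC⟩ := hu
  have hsum : ∀ g : H, Summable fun s : ℕ ↦ ⟪g, K s⟫_ℝ * u (τ - s) := fun g ↦ by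
    simpa only [hrep] using summable_mul_of_summable_abs_of_abs_le (hl1 g) fun s ↦ hC (τ - s)
  obtain ⟨φ, hφ⟩ := exists_inner_eq_tsum_inner_mul_of_summable K _ hsum
  have hL : ∀ g : H, ∑' s : ℕ, ι g s * u (τ - s) = ⟪φ, g⟫_ℝ := fun g ↦ by
    simp only [hφ, hrep]
  refine ⟨φ, fun t ↦ ?_, hL, ‖φ‖, fun g ↦ hL g ▸ abs_real_inner_le_norm φ g⟩
  rw [← hrep, hφ]
  simp only [hrep, hK]

/-- For an integrable Mercer kernel `k` on `ℤ≥0` with RKHS `H` whose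
elements are all absolutely summable, a bounded `u : ℤ → ℝ` and `τ ∈ ℤ≥0`, the
function `φ(t) = ∑_{s∈ℤ≥0} k(t,s) u(τ-s)` belongs to `H`, represents the convolution
functional `L_u^τ(g) = ∑_{s∈ℤ≥0} g(s) u(τ-s)`, and in particular `L_u^τ` is a
bounded (continuous) linear functional on `H`. -/
theorem stmt_9
    {H : Type*} [NormedAddCommGroup H] [InnerProductSpace ℝ H] [CompleteSpace H]
    (k : ℕ → ℕ → ℝ)
    (hsymm : ∀ s t, k s t = k t s)
    (hpsd : ∀ (n : ℕ) (t : Fin n → ℕ) (a : Fin n → ℝ),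
      0 ≤ ∑ i, ∑ j, a i * a j * k (t i) (t j))
    (hint : Summable fun p : ℕ × ℕ => |k p.1 p.2|)
    (ι : H →ₗ[ℝ] (ℕ → ℝ)) (hι : Function.Injective ι)
    (K : ℕ → H) (hK : ∀ t s, ι (K t) s = k t s)
    (hrep : ∀ (g : H) (t : ℕ), ⟪g, K t⟫_ℝ = ι g t)
    (hl1 : ∀ g : H, Summable fun t => |ι g t|)
    (u : ℤ → ℝ) (hu : ∃ C, ∀ s, |u s| ≤ C)
    (τ : ℕ) :
    ∃ φ : H,
      (∀ t : ℕ, ι φ t = ∑' s : ℕ, k t s * u (τ - s)) ∧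
      (∀ g : H, ∑' s : ℕ, ι g s * u (τ - s) = ⟪φ, g⟫_ℝ) ∧
      ∃ C : ℝ, ∀ g : H, |∑' s : ℕ, ι g s * u (τ - s)| ≤ C * ‖g‖ :=
  stmt_9_general k ι K hK hrep hl1 u hu τ
end

section
/- Let k be an integrable Mercer kernel on 𝕋 = [0,∞) with RKHS H, assume every element of H is Lebesgue integrable on 𝕋, let u : ℝ → ℝ be an essentially bounded measurable function, let t_1,…,t_n ∈ 𝕋, let y_1,…,y_n ∈ ℝ, and let λ > 0. Then the regularized least-squares problem min over g ∈ H of Σ_{i=1}^n (L_u^{t_i}(g) − y_i)² + λ ‖g‖_H², where L_u^{t_i}(g) := ∫_{[0,∞)} g(s) u(t_i − s) ds, admits a unique minimizer. -/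
open scoped InnerProductSpace ENNReal
open MeasureTheory Set

/-!
The reproducing property makes point evaluations continuous on `H`, so by the closed graph
theorem the inclusion `H → L¹[0,∞)` is bounded; pairing with the shifted reflection of
`u ∈ L^∞` then makes each `L_u^{t_i}` a bounded linear functional. For bounded functionals
`ℓ_i` the objective `∑ (ℓ_i g - y_i)² + λ‖g‖²` is a quadratic whose quadratic part is
`λ`-coercive: Lax–Milgram solves its normal equation, and expanding about that solution
shows it is the unique minimiser.
-/

namespace LinearMap

variable {𝕜 E F α : Type*} [NontriviallyNormedField 𝕜] [NormedAddCommGroup E] [NormedSpace 𝕜 E]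
  [NormedAddCommGroup F] [NormedSpace 𝕜 F] {m : MeasurableSpace α} {μ : Measure α} {p : ℝ≥0∞}

noncomputable def toLpOfMemLp (T : E →ₗ[𝕜] α → F) (hT : ∀ g, MemLp (T g) p μ) :
    E →ₗ[𝕜] Lp F p μ where
  toFun g := (hT g).toLp (T g)
  map_add' g₁ g₂ := by simp_rw [map_add]; exact MemLp.toLp_add (hT g₁) (hT g₂)
  map_smul' c g := by simp_rw [map_smul]; exact MemLp.toLp_const_smul c (hT g)

theorem coeFn_toLpOfMemLp (T : E →ₗ[𝕜] α → F) (hT : ∀ g, MemLp (T g) p μ) (g : E) :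
    T.toLpOfMemLp hT g =ᵐ[μ] T g :=
  (hT g).coeFn_toLp

/-- Closed graph theorem: if the point evaluations are continuous, then `Lp` convergence along a
subsequence is a.e. pointwise convergence, so the graph of `T.toLpOfMemLp` is closed. -/
theorem continuous_toLpOfMemLp [CompleteSpace E] [CompleteSpace F] [Fact (1 ≤ p)]
    (T : E →ₗ[𝕜] α → F) (hT : ∀ g, MemLp (T g) p μ)
    (heval : ∀ᵐ x ∂μ, Continuous fun g => T g x) : Continuous (T.toLpOfMemLp hT) := by
  refine (T.toLpOfMemLp hT).continuous_of_seq_closed_graph fun gs g f hg hTg => ?_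
  obtain ⟨ns, hns, hae⟩ := (tendstoInMeasure_of_tendsto_Lp hTg).exists_seq_tendsto_ae
  have hcoe : ∀ᵐ x ∂μ, ∀ k, (T.toLpOfMemLp hT (gs k) : α → F) x = T (gs k) x :=
    ae_all_iff.2 fun k => T.coeFn_toLpOfMemLp hT (gs k)
  refine Lp.ext ?_
  filter_upwards [hae, hcoe, T.coeFn_toLpOfMemLp hT g, heval] with x hx hcoex hgx hcont
  rw [hgx]
  refine tendsto_nhds_unique ?_ ((hcont.tendsto g).comp (hg.comp hns.tendsto_atTop))
  simpa only [Function.comp_def, hcoex] using hx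

end LinearMap

theorem exists_strongDual_eq_integral_mul {𝕜 E α : Type*} [RCLike 𝕜] [NormedAddCommGroup E]
    [NormedSpace 𝕜 E] [CompleteSpace E] {m : MeasurableSpace α} {μ : Measure α}
    (T : E →ₗ[𝕜] α → 𝕜) (hT : ∀ g, Integrable (T g) μ)
    (heval : ∀ᵐ x ∂μ, Continuous fun g => T g x) {φ : α → 𝕜} (hφ : MemLp φ ∞ μ) :
    ∃ ℓ : StrongDual 𝕜 E, ∀ g, ℓ g = ∫ x, T g x * φ x ∂μ := by
  have hT₁ : ∀ g, MemLp (T g) 1 μ := fun g => memLp_one_iff_integrable.2 (hT g)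
  let T₁ : E →L[𝕜] Lp 𝕜 1 μ := ⟨T.toLpOfMemLp hT₁, T.continuous_toLpOfMemLp hT₁ heval⟩
  refine ⟨((ContinuousLinearMap.mul 𝕜 𝕜).lpPairing μ 1 ∞).flip (hφ.toLp φ) ∘L T₁, fun g => ?_⟩
  rw [ContinuousLinearMap.comp_apply, ContinuousLinearMap.flip_apply,
    ContinuousLinearMap.lpPairing_eq_integral]
  refine integral_congr_ae ?_
  filter_upwards [T.coeFn_toLpOfMemLp hT₁ g, hφ.coeFn_toLp] with x hgx hφx
  simp [T₁, hgx, hφx]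

section RegularizedLeastSquares

variable {ι H : Type*} [Fintype ι] [NormedAddCommGroup H] [InnerProductSpace ℝ H]

def regularizedLeastSquares (ℓ : ι → StrongDual ℝ H) (y : ι → ℝ) (lam : ℝ) (g : H) : ℝ :=
  ∑ i, (ℓ i g - y i) ^ 2 + lam * ‖g‖ ^ 2

theorem regularizedLeastSquares_eq_of_normal_eq {ℓ : ι → StrongDual ℝ H} {y : ι → ℝ} {lam : ℝ}
    {g₀ : H} (hg₀ : ∀ h, ∑ i, ℓ i g₀ * ℓ i h + lam * ⟪g₀, h⟫_ℝ = ∑ i, y i * ℓ i h) (g : H) :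
    regularizedLeastSquares ℓ y lam g =
      regularizedLeastSquares ℓ y lam g₀ + (∑ i, ℓ i (g - g₀) ^ 2 + lam * ‖g - g₀‖ ^ 2) := by
  obtain ⟨d, rfl⟩ : ∃ d, g = g₀ + d := ⟨g - g₀, by abel⟩
  have hsum : ∑ i, (ℓ i g₀ + ℓ i d - y i) ^ 2 = ∑ i, (ℓ i g₀ - y i) ^ 2 + ∑ i, ℓ i d ^ 2
      + 2 * (∑ i, ℓ i g₀ * ℓ i d - ∑ i, y i * ℓ i d) := by
    simp only [Finset.mul_sum, ← Finset.sum_add_distrib, ← Finset.sum_sub_distrib]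
    exact Finset.sum_congr rfl fun i _ => by ring
  simp only [regularizedLeastSquares, add_sub_cancel_left, map_add, norm_add_sq_real, hsum]
  linear_combination 2 * hg₀ d

theorem exists_normal_eq [CompleteSpace H] (ℓ : ι → StrongDual ℝ H) (y : ι → ℝ) {lam : ℝ}
    (hlam : 0 < lam) :
    ∃ g₀ : H, ∀ h, ∑ i, ℓ i g₀ * ℓ i h + lam * ⟪g₀, h⟫_ℝ = ∑ i, y i * ℓ i h := by
  -- `innerSL ℝ` is typed as sesquilinear for `starRingEnd ℝ`, which `+` on bilinear maps rejects
  let innerBilin : H →L[ℝ] H →L[ℝ] ℝ := innerSL ℝ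
  have h_inner : ∀ g h, innerBilin g h = ⟪g, h⟫_ℝ := fun _ _ => rfl
  let B : H →L[ℝ] H →L[ℝ] ℝ := ∑ i, (ℓ i).smulRight (ℓ i) + lam • innerBilin
  have hB : ∀ g h, B g h = ∑ i, ℓ i g * ℓ i h + lam * ⟪g, h⟫_ℝ := fun g h => by
    simp [B, h_inner]
  have hcoercive : IsCoercive B := ⟨lam, hlam, fun g => by
    rw [hB, real_inner_self_eq_norm_mul_norm, mul_assoc]
    exact le_add_of_nonneg_left (Finset.sum_nonneg fun i _ => mul_self_nonneg _)⟩
  refine ⟨hcoercive.continuousLinearEquivOfBilin.symm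
    ((InnerProductSpace.toDual ℝ H).symm (∑ i, y i • ℓ i)), fun h => ?_⟩
  rw [← hB, ← hcoercive.continuousLinearEquivOfBilin_apply,
    ContinuousLinearEquiv.apply_symm_apply, InnerProductSpace.toDual_symm_apply]
  simp

theorem existsUnique_forall_regularizedLeastSquares_le [CompleteSpace H]
    (ℓ : ι → StrongDual ℝ H) (y : ι → ℝ) {lam : ℝ} (hlam : 0 < lam) :
    ∃! g₀ : H, ∀ g, regularizedLeastSquares ℓ y lam g₀ ≤ regularizedLeastSquares ℓ y lam g := by
  obtain ⟨g₀, hg₀⟩ := exists_normal_eq ℓ y hlam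
  have hexpand := regularizedLeastSquares_eq_of_normal_eq hg₀
  refine ⟨g₀, fun g => ?_, fun g hg => ?_⟩
  · rw [hexpand g]
    exact le_add_of_nonneg_right (by positivity)
  · have hle := hexpand g ▸ hg g₀
    have hsq : ‖g - g₀‖ ^ 2 ≤ 0 := by
      nlinarith [Finset.sum_nonneg fun i (_ : i ∈ Finset.univ) => sq_nonneg (ℓ i (g - g₀))]
    rw [← sub_eq_zero, ← norm_eq_zero]
    exact pow_eq_zero_iff two_ne_zero |>.1 (le_antisymm hsq (sq_nonneg _))

end RegularizedLeastSquares

theorem stmt_10_general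
    {H : Type*} [NormedAddCommGroup H] [InnerProductSpace ℝ H] [CompleteSpace H]
    (ι : H →ₗ[ℝ] (ℝ → ℝ))
    (K : ℝ → H)
    (hrep : ∀ g : H, ∀ t ∈ Ici (0:ℝ), ⟪g, K t⟫_ℝ = ι g t)
    (hL1 : ∀ g : H, IntegrableOn (ι g) (Ici 0))
    (u : ℝ → ℝ) (hu : MemLp u ⊤ volume)
    (n : ℕ) (t : Fin n → ℝ)
    (y : Fin n → ℝ) (lam : ℝ) (hlam : 0 < lam) :
    ∃! gstar : H, ∀ g : H,
      (∑ i, ((∫ s in Ici (0:ℝ), ι gstar s * u (t i - s)) - y i) ^ 2)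
          + lam * ‖gstar‖ ^ 2 ≤
        (∑ i, ((∫ s in Ici (0:ℝ), ι g s * u (t i - s)) - y i) ^ 2)
          + lam * ‖g‖ ^ 2 := by
  have heval : ∀ᵐ s ∂volume.restrict (Ici (0:ℝ)), Continuous fun g : H => ι g s := by
    filter_upwards [ae_restrict_mem measurableSet_Ici] with s hs
    simp only [← hrep _ s hs]
    fun_prop
  have hu_shift (τ : ℝ) : MemLp (fun s => u (τ - s)) ∞ (volume.restrict (Ici 0)) :=
    (hu.comp_measurePreserving (Measure.measurePreserving_sub_left volume τ)).restrict _
  choose ℓ hℓ using fun i => exists_strongDual_eq_integral_mul ι hL1 heval (hu_shift (t i))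
  simpa only [regularizedLeastSquares, hℓ] using
    existsUnique_forall_regularizedLeastSquares_le ℓ y hlam

/-- For an integrable Mercer kernel `k` on `[0,∞)` with RKHS `H` whose
elements are all integrable on `[0,∞)`, an essentially bounded measurable input
`u : ℝ → ℝ`, sampling times `t i ≥ 0`, data `y i` and `λ > 0`, the regularized
least-squares problem `min_{g ∈ H} ∑ i (L_u^{t i}(g) - y i)² + λ‖g‖²` with
`L_u^{t i}(g) = ∫_{[0,∞)} g(s) u(t i - s) ds` admits a unique minimizer. -/
theorem stmt_10
    {H : Type*} [NormedAddCommGroup H] [InnerProductSpace ℝ H] [CompleteSpace H]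
    (k : ℝ → ℝ → ℝ)
    (hcont : ContinuousOn (fun p : ℝ × ℝ => k p.1 p.2) (Ici 0 ×ˢ Ici 0))
    (hsymm : ∀ s ∈ Ici (0:ℝ), ∀ t ∈ Ici (0:ℝ), k s t = k t s)
    (hpsd : ∀ (n : ℕ) (t : Fin n → ℝ), (∀ i, 0 ≤ t i) →
      ∀ a : Fin n → ℝ, 0 ≤ ∑ i, ∑ j, a i * a j * k (t i) (t j))
    (hint : IntegrableOn (fun p : ℝ × ℝ => k p.1 p.2) (Ici 0 ×ˢ Ici 0))
    (ι : H →ₗ[ℝ] (ℝ → ℝ))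
    (hι : ∀ g₁ g₂ : H, (∀ t ∈ Ici (0:ℝ), ι g₁ t = ι g₂ t) → g₁ = g₂)
    (K : ℝ → H) (hK : ∀ t ∈ Ici (0:ℝ), ∀ s ∈ Ici (0:ℝ), ι (K t) s = k t s)
    (hrep : ∀ g : H, ∀ t ∈ Ici (0:ℝ), ⟪g, K t⟫_ℝ = ι g t)
    (hL1 : ∀ g : H, IntegrableOn (ι g) (Ici 0))
    (u : ℝ → ℝ) (hu : MemLp u ⊤ volume)
    (n : ℕ) (t : Fin n → ℝ) (ht : ∀ i, 0 ≤ t i)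
    (y : Fin n → ℝ) (lam : ℝ) (hlam : 0 < lam) :
    ∃! gstar : H, ∀ g : H,
      (∑ i, ((∫ s in Ici (0:ℝ), ι gstar s * u (t i - s)) - y i) ^ 2)
          + lam * ‖gstar‖ ^ 2 ≤
        (∑ i, ((∫ s in Ici (0:ℝ), ι g s * u (t i - s)) - y i) ^ 2)
          + lam * ‖g‖ ^ 2 :=
  stmt_10_general ι K hrep hL1 u hu n t y lam hlam
end

section
/- Let k be an integrable Mercer kernel on ℤ≥0 with RKHS H, let v : ℤ≥0 → ℝ be a bounded function, and for n ∈ ℕ define f_n := Σ_{s=0}^{n} v(s) k(·,s) ∈ H. Then (f_n)_{n∈ℕ} is a Cauchy sequence in H, and its limit f ∈ H satisfies f(t) = Σ_{s∈ℤ≥0} k(t,s) v(s) for every t ∈ ℤ≥0. -/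
open scoped InnerProductSpace
open Filter Topology

/-- For an integrable Mercer kernel `k` on `ℤ≥0` with RKHS `H` and a
bounded `v : ℕ → ℝ`, the partial sums `f_n = ∑_{s=0}^{n} v(s) • k(·,s)` form a
Cauchy sequence in `H`, and the limit `f` satisfies `f(t) = ∑_{s∈ℤ≥0} k(t,s) v(s)`
for every `t ∈ ℤ≥0`. -/
theorem stmt_15
    {H : Type*} [NormedAddCommGroup H] [InnerProductSpace ℝ H] [CompleteSpace H]
    (k : ℕ → ℕ → ℝ)
    (hsymm : ∀ s t, k s t = k t s)
    (hpsd : ∀ (n : ℕ) (t : Fin n → ℕ) (a : Fin n → ℝ),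
      0 ≤ ∑ i, ∑ j, a i * a j * k (t i) (t j))
    (hint : Summable fun p : ℕ × ℕ => |k p.1 p.2|)
    (ι : H →ₗ[ℝ] (ℕ → ℝ)) (hι : Function.Injective ι)
    (K : ℕ → H) (hK : ∀ t s, ι (K t) s = k t s)
    (hrep : ∀ (g : H) (t : ℕ), ⟪g, K t⟫_ℝ = ι g t)
    (v : ℕ → ℝ) (hv : ∃ C, ∀ s, |v s| ≤ C) :
    CauchySeq (fun n : ℕ => ∑ s ∈ Finset.range (n + 1), v s • K s) ∧
      ∃ f : H,
        Tendsto (fun n : ℕ => ∑ s ∈ Finset.range (n + 1), v s • K s) atTop (𝓝 f) ∧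
        ∀ t : ℕ, ι f t = ∑' s : ℕ, k t s * v s := by
  obtain ⟨C, hC⟩ := hv
  set C' : ℝ := max C 1 with hC'
  have hC'pos : 0 < C' := lt_of_lt_of_le one_pos (le_max_right _ _)
  have hvC' : ∀ s, |v s| ≤ C' := fun s => (hC s).trans (le_max_left _ _)
  have hKK : ∀ s t, ⟪K s, K t⟫_ℝ = k s t := fun s t => by
    rw [hrep]; exact hK s t
  -- norm of finite sums
  have hnorm : ∀ F : Finset ℕ, ‖∑ s ∈ F, v s • K s‖ ^ 2
      = ∑ s ∈ F, ∑ t ∈ F, v s * v t * k s t := by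
    intro F
    rw [← real_inner_self_eq_norm_sq, sum_inner]
    refine Finset.sum_congr rfl fun s _ => ?_
    rw [inner_sum]
    refine Finset.sum_congr rfl fun t _ => ?_
    rw [real_inner_smul_left, real_inner_smul_right, hKK]
    ring
  -- summability of v • K
  have hsummable : Summable fun s : ℕ => v s • K s := by
    rw [summable_iff_vanishing]
    intro e he
    obtain ⟨ε, hε, hball⟩ := Metric.mem_nhds_iff.mp he
    have hδ : (0:ℝ) < ε ^ 2 / C' ^ 2 := by positivity
    obtain ⟨u, hu⟩ := (summable_iff_vanishing.mp hint) (Metric.ball 0 (ε ^ 2 / C' ^ 2))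
      (Metric.ball_mem_nhds _ hδ)
    refine ⟨u.image Prod.fst ∪ u.image Prod.snd, fun F hF => ?_⟩
    have hdisj : Disjoint (F ×ˢ F) u := by
      rw [Finset.disjoint_left]
      rintro ⟨a, b⟩ hab hu'
      rw [Finset.mem_product] at hab
      exact (Finset.disjoint_left.mp hF) hab.1
        (Finset.mem_union_left _ (Finset.mem_image_of_mem Prod.fst hu'))
    have hsum := hu _ hdisj
    rw [Metric.mem_ball, dist_zero_right, Real.norm_eq_abs] at hsum
    have hpos : ∑ p ∈ F ×ˢ F, |k p.1 p.2| < ε ^ 2 / C' ^ 2 :=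
      lt_of_le_of_lt (le_abs_self _) hsum
    apply hball
    rw [Metric.mem_ball, dist_zero_right]
    have hb : ‖∑ s ∈ F, v s • K s‖ ^ 2 < ε ^ 2 := by
      rw [hnorm]
      calc ∑ s ∈ F, ∑ t ∈ F, v s * v t * k s t
          ≤ ∑ s ∈ F, ∑ t ∈ F, C' * C' * |k s t| := by
            refine Finset.sum_le_sum fun s _ => Finset.sum_le_sum fun t _ => ?_
            calc v s * v t * k s t ≤ |v s * v t * k s t| := le_abs_self _
              _ = |v s| * |v t| * |k s t| := by rw [abs_mul, abs_mul]
              _ ≤ C' * C' * |k s t| := by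
                  exact mul_le_mul_of_nonneg_right
                    (mul_le_mul (hvC' s) (hvC' t) (abs_nonneg _) hC'pos.le)
                    (abs_nonneg _)
        _ = C' ^ 2 * ∑ p ∈ F ×ˢ F, |k p.1 p.2| := by
            rw [Finset.sum_product, Finset.mul_sum]
            refine Finset.sum_congr rfl fun s _ => ?_
            rw [Finset.mul_sum]
            exact Finset.sum_congr rfl fun t _ => by ring
        _ < C' ^ 2 * (ε ^ 2 / C' ^ 2) := by
            apply mul_lt_mul_of_pos_left hpos (by positivity)
        _ = ε ^ 2 := by field_simp
    nlinarith [norm_nonneg (∑ s ∈ F, v s • K s)]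
  obtain ⟨f, hf⟩ := hsummable
  have htend : Tendsto (fun n : ℕ => ∑ s ∈ Finset.range (n + 1), v s • K s) atTop (𝓝 f) :=
    hf.tendsto_sum_nat.comp (tendsto_add_atTop_nat 1)
  refine ⟨htend.cauchySeq, f, htend, fun t => ?_⟩
  have hmap : HasSum (fun s => v s * ⟪K t, K s⟫_ℝ) ⟪K t, f⟫_ℝ := by
    simpa using (innerSL ℝ (K t)).hasSum hf
  have heq : (fun s => v s * ⟪K t, K s⟫_ℝ) = fun s => k t s * v s := by
    funext s
    rw [real_inner_comm, hKK, hsymm]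
    ring
  rw [heq] at hmap
  rw [← hrep, real_inner_comm]
  exact hmap.tsum_eq.symm
end
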